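/- Let m ≥ 0. The set of matrices S ∈ M_{(m+2)×2}(K) such that there exist P″ ∈ K^m and Q, R ∈ K^{m+1} with S·X^1_2 = X^{m+1}_{m+2} X^m_{m+1} P″, S·Y^1_2 = Y^{m+1}_{m+2} Q and S·Z^1_2 = Z^{m+1}_{m+2} R equals { S : S_{m+1,1} = S_{m+2,1} = 0, S_{1,2} = 0, and S_{1,1} + S_{1,2} = Σ_{i=2}^{m+2} ε_i (S_{i,1} + S_{i,2}) }, where ε_i = +1 if i ≡ 2 or 3 (mod 4) and ε_i = −1 if i ≡ 0 or 1 (mod 4). In particular this set is a 2m-dimensional subspace of M_{(m+2)×2}(K). -/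

import Mathlib

/-- `X^n_{n+i}`: the `(n+i) × n` matrix whose top `n` rows form the identity and whose
bottom `i` rows are zero. -/
def Xmat (K : Type*) [Field K] (n i : ℕ) : Matrix (Fin (n + i)) (Fin n) K :=
  Matrix.of fun r c => if (r : ℕ) = (c : ℕ) then 1 else 0

/-- `Y^n_{n+i}`: the `(n+i) × n` matrix whose top `i` rows are zero and whose bottom
`n` rows form the identity. -/
def Ymat (K : Type*) [Field K] (n i : ℕ) : Matrix (Fin (n + i)) (Fin n) K :=
  Matrix.of fun r c => if (r : ℕ) = (c : ℕ) + i then 1 else 0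

/-- The matrix `Z^{m+1}_{m+2}`, determined by `(Zr)_1 = r_1 + r_2` and
`(Zr)_i = r_{i-1} + r_{i+1}` for `2 ≤ i ≤ m+2` (1-based, `r_j = 0` for `j > m+1`). -/
def Zmat2 (K : Type*) [Field K] (m : ℕ) : Matrix (Fin (m + 2)) (Fin (m + 1)) K :=
  Matrix.of fun r c =>
    if (r : ℕ) = 0 then (if (c : ℕ) = 0 ∨ (c : ℕ) = 1 then 1 else 0)
    else (if (c : ℕ) + 1 = (r : ℕ) ∨ (c : ℕ) = (r : ℕ) + 1 then 1 else 0)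

/-- `ε_i = +1` if `i ≡ 2, 3 (mod 4)` and `ε_i = -1` if `i ≡ 0, 1 (mod 4)`. -/
def eps4 (K : Type*) [Field K] (i : ℕ) : K :=
  if i % 4 = 2 ∨ i % 4 = 3 then 1 else -1

/-- `Σ_{i=2}^{m+2} ε_i (S_{i,1} + S_{i,2})` (1-based row indices). -/
def rowSum (K : Type*) [Field K] (m : ℕ) (S : Matrix (Fin (m + 2)) (Fin 2) K) : K :=
  ∑ i : Fin (m + 2), (if (i : ℕ) = 0 then 0 else eps4 K ((i : ℕ) + 1)) * (S i 0 + S i 1)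

/-- `S·X^1_2 = X^{m+1}_{m+2} X^m_{m+1} P''`, `S·Y^1_2 = Y^{m+1}_{m+2} Q` and
`S·Z^1_2 = Z^{m+1}_{m+2} R` for some `P'' ∈ K^m`, `Q, R ∈ K^{m+1}`. -/
def cond7 (K : Type*) [Field K] (m : ℕ) (S : Matrix (Fin (m + 2)) (Fin 2) K) : Prop :=
  ∃ (P'' : Fin m → K) (Q R : Fin (m + 1) → K),
    S.mulVec ![1, 0] = (Xmat K (m + 1) 1).mulVec ((Xmat K m 1).mulVec P'') ∧
    S.mulVec ![0, 1] = (Ymat K (m + 1) 1).mulVec Q ∧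
    S.mulVec ![1, 1] = (Zmat2 K m).mulVec R

/-!
The three conditions constrain the columns of `S` separately. `S X = X X P''` says that the first
column vanishes in its last two rows, and `S Y = Y Q` that the second column vanishes in its first
row. `S Z = Z R` says that the column sum `t` lies in the range of the tridiagonal matrix `Z`: the
last `m + 1` rows of `Z R = t` are always solved by back substitution `R_j = t_{j+1} - R_{j+2}`,
and the signs `ε` make `Σ_{i ≥ 2} ε_i t_i = Σ_{i ≥ 2} ε_i (R_{i-1} + R_{i+1})` telescope to
`R_1 + R_2`, so the remaining first row is solvable iff `t_1 = Σ_{i ≥ 2} ε_i t_i`.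

The four linear conditions are independent, since the last one can be adjusted through
`S_{m+2,2}` alone, so they cut out a subspace of dimension `2 (m + 2) - 4 = 2 m`.
-/

namespace Enlargement

open Matrix

section ZeroExtension

variable {K : Type*} [Zero K]

def zeroExt {n : ℕ} (t : Fin n → K) (k : ℕ) : K := if h : k < n then t ⟨k, h⟩ else 0

lemma zeroExt_of_lt {n : ℕ} (t : Fin n → K) {k : ℕ} (h : k < n) :
    zeroExt t k = t ⟨k, h⟩ :=
  dif_pos h

lemma zeroExt_of_le {n : ℕ} (t : Fin n → K) {k : ℕ} (h : n ≤ k) : zeroExt t k = 0 :=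
  dif_neg (by omega)

lemma zeroExt_val {n : ℕ} (t : Fin n → K) (i : Fin n) : zeroExt t i = t i :=
  zeroExt_of_lt t i.isLt

end ZeroExtension

lemma sum_ite_val_mul_eq_zeroExt {R : Type*} [NonAssocSemiring R] {n : ℕ} (t : Fin n → R)
    (k : ℕ) :
    ∑ c : Fin n, (if (c : ℕ) = k then 1 else 0) * t c = zeroExt t k := by
  by_cases h : k < n
  · rw [zeroExt_of_lt t h, Fintype.sum_eq_single ⟨k, h⟩ fun c hc => by
      rw [if_neg (fun hck => hc (Fin.ext hck)), zero_mul]]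
    simp
  · rw [zeroExt_of_le t (by omega)]
    exact Finset.sum_eq_zero fun c _ => by rw [if_neg (by omega), zero_mul]

lemma mulVec_fin_two_apply {ι R : Type*} [NonUnitalNonAssocSemiring R]
    (S : Matrix ι (Fin 2) R) (a b : R) (r : ι) : (S *ᵥ ![a, b]) r = S r 0 * a + S r 1 * b := by
  simp [mulVec, dotProduct, Fin.sum_univ_two]

variable {K : Type*} [Field K]

lemma Xmat_mulVec_apply {n i : ℕ} (P : Fin n → K) (r : Fin (n + i)) :
    (Xmat K n i *ᵥ P) r = zeroExt P r := by
  rw [← sum_ite_val_mul_eq_zeroExt]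
  simp only [Xmat, mulVec, dotProduct, of_apply, eq_comm]

lemma zeroExt_Xmat_mulVec {n i : ℕ} (P : Fin n → K) :
    zeroExt (Xmat K n i *ᵥ P) = zeroExt P := by
  funext k
  by_cases h : k < n + i
  · rw [zeroExt_of_lt _ h, Xmat_mulVec_apply]
  · rw [zeroExt_of_le _ (by omega), zeroExt_of_le _ (by omega)]

lemma Xmat_mulVec_Xmat_mulVec {n : ℕ} (P : Fin n → K) :
    Xmat K (n + 1) 1 *ᵥ (Xmat K n 1 *ᵥ P) = Xmat K n 2 *ᵥ P := by
  funext r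
  rw [Xmat_mulVec_apply, zeroExt_Xmat_mulVec, Xmat_mulVec_apply]

lemma exists_eq_Xmat_mulVec_iff {n i : ℕ} (v : Fin (n + i) → K) :
    (∃ P, v = Xmat K n i *ᵥ P) ↔ ∀ r : Fin (n + i), n ≤ r → v r = 0 := by
  constructor
  · rintro ⟨P, rfl⟩ r hr
    rw [Xmat_mulVec_apply, zeroExt_of_le P hr]
  · intro hv
    refine ⟨fun j => v (Fin.castAdd i j), funext fun r => ?_⟩
    rw [Xmat_mulVec_apply]
    by_cases hr : (r : ℕ) < n
    · rw [zeroExt_of_lt _ hr]; rfl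
    · rw [zeroExt_of_le _ (by omega), hv r (by omega)]

lemma Ymat_mulVec_apply {n i : ℕ} (Q : Fin n → K) (r : Fin (n + i)) :
    (Ymat K n i *ᵥ Q) r = if i ≤ r then zeroExt Q (r - i) else 0 := by
  split_ifs with h
  · rw [← sum_ite_val_mul_eq_zeroExt]
    simp only [Ymat, mulVec, dotProduct, of_apply]
    refine Finset.sum_congr rfl fun c _ => ?_
    congr 1
    exact if_congr (by omega) rfl rfl
  · simp only [Ymat, mulVec, dotProduct, of_apply]
    exact Finset.sum_eq_zero fun c _ => by rw [if_neg (by omega), zero_mul]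

lemma exists_eq_Ymat_mulVec_iff {n i : ℕ} (v : Fin (n + i) → K) :
    (∃ Q, v = Ymat K n i *ᵥ Q) ↔ ∀ r : Fin (n + i), r < i → v r = 0 := by
  constructor
  · rintro ⟨Q, rfl⟩ r hr
    rw [Ymat_mulVec_apply, if_neg (by omega)]
  · intro hv
    refine ⟨fun j => v ⟨j + i, by omega⟩, funext fun r => ?_⟩
    rw [Ymat_mulVec_apply]
    split_ifs with hr
    · rw [zeroExt_of_lt _ (by omega)]
      exact congrArg v (Fin.ext (Nat.sub_add_cancel hr).symm)
    · exact hv r (by omega)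

/-- At `r = 0` the truncated subtraction `r - 1 = 0` yields the first row `R 0 + R 1`. -/
lemma Zmat2_mulVec_apply {m : ℕ} (R : Fin (m + 1) → K) (r : Fin (m + 2)) :
    (Zmat2 K m *ᵥ R) r = zeroExt R (r - 1) + zeroExt R (r + 1) := by
  rw [← sum_ite_val_mul_eq_zeroExt, ← sum_ite_val_mul_eq_zeroExt,
    ← Finset.sum_add_distrib]
  simp only [Zmat2, mulVec, dotProduct, of_apply, ← add_mul]
  refine Finset.sum_congr rfl fun c _ => ?_
  congr 1
  split_ifs <;> first | omega | norm_num

lemma eps4_add_two (n : ℕ) : eps4 K (n + 2) = -eps4 K n := by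
  unfold eps4
  split_ifs <;> first | omega | norm_num

lemma eps4_mul_self (n : ℕ) : eps4 K n * eps4 K n = 1 := by
  unfold eps4
  split_ifs <;> norm_num

lemma sum_range_eps4_mul_add (g : ℕ → K) (n : ℕ) :
    ∑ i ∈ Finset.range (n + 1), (if i = 0 then 0 else eps4 K (i + 1)) * (g (i - 1) + g (i + 1))
      = g 0 + g 1 + eps4 K n * g n + eps4 K (n + 1) * g (n + 1) := by
  induction n with
  | zero => simp [eps4]
  | succ n ih =>
    rw [Finset.sum_range_succ, ih, if_neg n.succ_ne_zero, Nat.add_sub_cancel, eps4_add_two n]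
    ring

def epsSum {m : ℕ} (v : Fin (m + 2) → K) : K :=
  ∑ i : Fin (m + 2), (if (i : ℕ) = 0 then 0 else eps4 K (i + 1)) * v i

lemma rowSum_eq_epsSum {m : ℕ} (S : Matrix (Fin (m + 2)) (Fin 2) K) :
    rowSum K m S = epsSum (S *ᵥ ![1, 1]) := by
  simp only [rowSum, epsSum, mulVec_fin_two_apply, mul_one]

lemma epsSum_eq_of_forall_eq_add {m : ℕ} {v : Fin (m + 2) → K} {g : ℕ → K}
    (hv : ∀ i : Fin (m + 2), (i : ℕ) ≠ 0 → v i = g (i - 1) + g (i + 1))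
    (hg₁ : g (m + 1) = 0) (hg₂ : g (m + 2) = 0) : epsSum v = g 0 + g 1 := by
  calc epsSum v
      = ∑ i : Fin (m + 2), (if (i : ℕ) = 0 then 0 else eps4 K (i + 1)) *
          (g (i - 1) + g (i + 1)) :=
        Fintype.sum_congr _ _ fun i => by
          by_cases hi : (i : ℕ) = 0
          · simp only [hi, if_true, zero_mul]
          · rw [hv i hi]
    _ = g 0 + g 1 := by
        rw [Fin.sum_univ_eq_sum_range (fun i =>
          (if i = 0 then 0 else eps4 K (i + 1)) * (g (i - 1) + g (i + 1))),
          sum_range_eps4_mul_add, hg₁, hg₂]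
        ring

def backSub (n : ℕ) (t : ℕ → K) (j : ℕ) : K :=
  if n < j then 0 else t (j + 1) - backSub n t (j + 2)
termination_by n + 1 - j

lemma backSub_of_lt {n j : ℕ} (t : ℕ → K) (h : n < j) : backSub n t j = 0 := by
  rw [backSub, if_pos h]

lemma backSub_add_backSub {n : ℕ} {t : ℕ → K} (ht : ∀ k, n + 1 < k → t k = 0) (j : ℕ) :
    backSub n t j + backSub n t (j + 2) = t (j + 1) := by
  by_cases h : n < j
  · rw [backSub_of_lt t h, backSub_of_lt t (by omega), ht _ (by omega), add_zero]
  · rw [backSub, if_neg h]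
    ring

lemma exists_eq_Zmat2_mulVec_iff {m : ℕ} (v : Fin (m + 2) → K) :
    (∃ R, v = Zmat2 K m *ᵥ R) ↔ v 0 = epsSum v := by
  constructor
  · rintro ⟨R, rfl⟩
    rw [epsSum_eq_of_forall_eq_add (fun i _ => Zmat2_mulVec_apply R i)
      (zeroExt_of_le R le_rfl) (zeroExt_of_le R (by omega)), Zmat2_mulVec_apply]
    rfl
  · intro h0
    set g := backSub m (zeroExt v)
    have hg : ∀ k, m < k → g k = 0 := fun k => backSub_of_lt _
    have hv : ∀ i : Fin (m + 2), (i : ℕ) ≠ 0 → v i = g (i - 1) + g (i + 1) := by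
      intro i hi
      have := backSub_add_backSub (fun k hk => zeroExt_of_le v hk) (i - 1)
      rw [show (i : ℕ) - 1 + 2 = i + 1 by omega, show (i : ℕ) - 1 + 1 = i by omega,
        zeroExt_val] at this
      exact this.symm
    have hR : zeroExt (fun j : Fin (m + 1) => g j) = g := funext fun k => by
      by_cases hk : k < m + 1
      · rw [zeroExt_of_lt _ hk]
      · rw [zeroExt_of_le _ (by omega), hg k (by omega)]
    refine ⟨fun j => g j, funext fun r => ?_⟩
    rw [Zmat2_mulVec_apply, hR]
    by_cases hr : (r : ℕ) = 0
    · rw [show r = 0 from Fin.ext hr, h0, epsSum_eq_of_forall_eq_add hv (hg _ (by omega))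
        (hg _ (by omega))]
      rfl
    · exact hv r hr

lemma cond7_iff {m : ℕ} (S : Matrix (Fin (m + 2)) (Fin 2) K) :
    cond7 K m S ↔ S (Fin.last m).castSucc 0 = 0 ∧ S (Fin.last (m + 1)) 0 = 0 ∧ S 0 1 = 0 ∧
      S 0 0 + S 0 1 = rowSum K m S := by
  have hX : (∃ P, S *ᵥ ![1, 0] = Xmat K (m + 1) 1 *ᵥ (Xmat K m 1 *ᵥ P)) ↔
      S (Fin.last m).castSucc 0 = 0 ∧ S (Fin.last (m + 1)) 0 = 0 := by
    simp_rw [Xmat_mulVec_Xmat_mulVec]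
    rw [exists_eq_Xmat_mulVec_iff]
    simp only [mulVec_fin_two_apply, mul_one, mul_zero, add_zero]
    refine ⟨fun h => ⟨h _ le_rfl, h _ m.le_succ⟩, fun ⟨h₀, h₁⟩ r hr => ?_⟩
    obtain hr | hr : (r : ℕ) = m ∨ (r : ℕ) = m + 1 := by omega
    · rwa [show r = (Fin.last m).castSucc from Fin.ext hr]
    · rwa [show r = Fin.last (m + 1) from Fin.ext hr]
  have hY : (∃ Q, S *ᵥ ![0, 1] = Ymat K (m + 1) 1 *ᵥ Q) ↔ S 0 1 = 0 := by
    refine (exists_eq_Ymat_mulVec_iff (n := m + 1) (i := 1) (S *ᵥ ![0, 1])).trans ?_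
    simp only [mulVec_fin_two_apply, mul_one, mul_zero, zero_add]
    refine ⟨fun h => h 0 Nat.one_pos, fun h r hr => ?_⟩
    rwa [show r = 0 from Fin.ext (Nat.lt_one_iff.mp hr)]
  have hZ : (∃ R, S *ᵥ ![1, 1] = Zmat2 K m *ᵥ R) ↔ S 0 0 + S 0 1 = rowSum K m S := by
    rw [exists_eq_Zmat2_mulVec_iff, rowSum_eq_epsSum, mulVec_fin_two_apply, mul_one, mul_one]
  simp only [cond7, exists_and_left, exists_and_right]
  rw [hX, hY, hZ, and_assoc]

def constraintMap (m : ℕ) : Matrix (Fin (m + 2)) (Fin 2) K →ₗ[K] Fin 4 → K :=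
  LinearMap.pi ![entryLinearMap K K (Fin.last m).castSucc 0,
    entryLinearMap K K (Fin.last (m + 1)) 0, entryLinearMap K K 0 1,
    entryLinearMap K K 0 0 + entryLinearMap K K 0 1 -
      ∑ i : Fin (m + 2), (if (i : ℕ) = 0 then 0 else eps4 K (i + 1)) •
        (entryLinearMap K K i 0 + entryLinearMap K K i 1)]

lemma constraintMap_apply {m : ℕ} (S : Matrix (Fin (m + 2)) (Fin 2) K) :
    constraintMap m S = ![S (Fin.last m).castSucc 0, S (Fin.last (m + 1)) 0, S 0 1,
      S 0 0 + S 0 1 - rowSum K m S] := by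
  ext k
  fin_cases k <;> simp [constraintMap, rowSum, DFunLike.ite_apply, mul_add]

lemma constraintMap_single_last_one {m : ℕ} (c : K) :
    constraintMap m (single (Fin.last (m + 1)) 1 c) = ![0, 0, 0, -(eps4 K (m + 2) * c)] := by
  have hrow : rowSum K m (single (Fin.last (m + 1)) 1 c) = eps4 K (m + 2) * c := by
    rw [rowSum, Fintype.sum_eq_single (Fin.last (m + 1)) fun i hi => by
      simp [Ne.symm hi]]
    simp
  rw [constraintMap_apply, hrow]
  ext k
  fin_cases k <;> simp

lemma constraintMap_surjective (m : ℕ) : Function.Surjective (constraintMap (K := K) m) := by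
  intro v
  set T : Matrix (Fin (m + 2)) (Fin 2) K := single (Fin.last m).castSucc 0 (v 0) +
    single (Fin.last (m + 1)) 0 (v 1) + single 0 1 (v 2)
  refine ⟨T + single (Fin.last (m + 1)) 1 (eps4 K (m + 2) * (constraintMap m T 3 - v 3)), ?_⟩
  rw [map_add, constraintMap_single_last_one]
  ext k
  fin_cases k
  · show constraintMap m T 0 + 0 = v 0
    simp [constraintMap_apply, T, (Fin.castSucc_lt_last (Fin.last m)).ne']
  · show constraintMap m T 1 + 0 = v 1
    simp [constraintMap_apply, T]
  · show constraintMap m T 2 + 0 = v 2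
    simp [constraintMap_apply, T]
  · show constraintMap m T 3 + -(eps4 K (m + 2) * (eps4 K (m + 2) * (constraintMap m T 3 - v 3)))
      = v 3
    linear_combination (v 3 - constraintMap m T 3) * eps4_mul_self (K := K) (m + 2)

lemma constraintMap_eq_zero_iff {m : ℕ} (S : Matrix (Fin (m + 2)) (Fin 2) K) :
    constraintMap m S = 0 ↔ S (Fin.last m).castSucc 0 = 0 ∧ S (Fin.last (m + 1)) 0 = 0 ∧
      S 0 1 = 0 ∧ S 0 0 + S 0 1 = rowSum K m S := by
  simp [constraintMap_apply, funext_iff, Fin.forall_fin_succ, sub_eq_zero]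

lemma finrank_ker_constraintMap (m : ℕ) :
    Module.finrank K (LinearMap.ker (constraintMap (K := K) m)) = 2 * m := by
  have h := LinearMap.finrank_range_add_finrank_ker (constraintMap (K := K) m)
  rw [LinearMap.range_eq_top.2 (constraintMap_surjective m), finrank_top, Module.finrank_fin_fun,
    Module.finrank_matrix] at h
  simp only [Fintype.card_fin, Module.finrank_self] at h
  omega

end Enlargement

theorem stmt7 (K : Type*) [Field K] (m : ℕ) :
    (∀ S : Matrix (Fin (m + 2)) (Fin 2) K,
      cond7 K m S ↔
        (S ⟨m, by omega⟩ 0 = 0 ∧ S ⟨m + 1, by omega⟩ 0 = 0 ∧ S 0 1 = 0 ∧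
          S 0 0 + S 0 1 = rowSum K m S)) ∧
    ∃ W : Submodule K (Matrix (Fin (m + 2)) (Fin 2) K),
      (∀ S, S ∈ W ↔ cond7 K m S) ∧ Module.finrank K W = 2 * m := by
  refine ⟨Enlargement.cond7_iff, LinearMap.ker (Enlargement.constraintMap m), fun S => ?_,
    Enlargement.finrank_ker_constraintMap m⟩
  rw [LinearMap.mem_ker, Enlargement.constraintMap_eq_zero_iff, Enlargement.cond7_iff]
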